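/- arXiv:0904.3674 — 5 statements merged into one kernel-verified Lean document; each statement's English description precedes it below -/
import Mathlib

section
/- Let k be an uncountable field and let A be an associative k-algebra equipped with a filtration {F_n}_{n≥0} such that every element of A is algebraic over k (i.e., every a ∈ A satisfies a nonzero polynomial relation: a^d is a k-linear combination of a, a^2, …, a^{d-1} for some d ≥ 1). Then every element of gr(A)_{≥1} is nilpotent. -/
/-!
Write `b = ∑ [a_n]` with `a_n ∈ F_n`, `n ≥ 1`, and lift it to `P = ∑ a_n X^n` in the Rees module,
so that `b^N` is the symbol of `P^N`. For a scalar `λ`, the element `P(λ)` lies in `F_m`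
(`m = deg P`) and is algebraic; as `k` is uncountable, a single degree `d` serves infinitely many
`λ`, and then every power `P(λ)^N`, `N ≥ 1`, lies in `F_{m(d-1)}`. By a Vandermonde argument all
coefficients of `P^N` lie in `F_{m(d-1)}` too. For `N = m(d-1) + 1` the coefficient of `X^t`
vanishes when `t < N` and lies in `F_{t-1}` otherwise, so its symbol is zero and `b^N = 0`.
-/

open Polynomial

section Filtration

variable {k A : Type*} [CommSemiring k] [Semiring A] [Algebra k A] {F : ℕ → Submodule k A}

theorem pow_mem_of_mem_filtration (hmulF : ∀ i j : ℕ, ∀ x ∈ F i, ∀ y ∈ F j, x * y ∈ F (i + j))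
    {a : A} {m : ℕ} (ha : a ∈ F m) {i : ℕ} (hi : 1 ≤ i) : a ^ i ∈ F (m * i) := by
  induction i, hi using Nat.le_induction with
  | base => simpa using ha
  | succ i _ ih => simpa [pow_succ, mul_add] using hmulF _ _ _ ih _ ha

theorem pow_mem_span_pow_Icc {a : A} {d : ℕ}
    (h : a ^ d ∈ Submodule.span k ((fun i : ℕ => a ^ i) '' Set.Icc 1 (d - 1)))
    {D : ℕ} (hD : 1 ≤ D) :
    a ^ D ∈ Submodule.span k ((fun i : ℕ => a ^ i) '' Set.Icc 1 (d - 1)) := by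
  set V := Submodule.span k ((fun i : ℕ => a ^ i) '' Set.Icc 1 (d - 1))
  have hV : V.map (LinearMap.mulRight k a) ≤ V := by
    rw [Submodule.map_span_le]
    rintro _ ⟨i, hi, rfl⟩
    rw [LinearMap.mulRight_apply, ← pow_succ]
    rcases (i + 1).lt_or_ge d with hlt | hge
    · exact Submodule.subset_span ⟨i + 1, ⟨by omega, by omega⟩, rfl⟩
    · rwa [show i + 1 = d by grind]
  rcases D.lt_or_ge d with hlt | hge
  · exact Submodule.subset_span ⟨D, ⟨hD, by omega⟩, rfl⟩
  clear hD
  induction D, hge using Nat.le_induction with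
  | base => exact h
  | succ D _ ih => exact hV ⟨_, ih, (pow_succ a D).symm⟩

theorem pow_mem_filtration_of_mem_span (hmono : Monotone F)
    (hmulF : ∀ i j : ℕ, ∀ x ∈ F i, ∀ y ∈ F j, x * y ∈ F (i + j)) {a : A} {m d : ℕ} (ha : a ∈ F m)
    (h : a ^ d ∈ Submodule.span k ((fun i : ℕ => a ^ i) '' Set.Icc 1 (d - 1)))
    {D : ℕ} (hD : 1 ≤ D) : a ^ D ∈ F (m * (d - 1)) := by
  refine Submodule.span_le.mpr ?_ (pow_mem_span_pow_Icc h hD)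
  rintro _ ⟨i, hi, rfl⟩
  exact hmono (Nat.mul_le_mul_left m hi.2) (pow_mem_of_mem_filtration hmulF ha hi.1)

end Filtration

theorem exists_infinite_setOf_of_uncountable {ι k : Type*} [Countable ι] [Uncountable k]
    {p : ι → k → Prop} (h : ∀ l, ∃ d, p d l) : ∃ d, {l | p d l}.Infinite := by
  by_contra! hfin
  refine Set.not_countable_univ ((Set.countable_iUnion fun d => (hfin d).countable).mono ?_)
  exact fun l _ => Set.mem_iUnion.mpr (h l)

theorem Polynomial.coeff_pow_eq_zero_of_lt {R : Type*} [Semiring R] {P : R[X]} (hP : P.coeff 0 = 0)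
    {n t : ℕ} (ht : t < n) : (P ^ n).coeff t = 0 := by
  obtain ⟨Q, rfl⟩ := X_dvd_iff.mpr hP
  rw [(commute_X Q).mul_pow, coeff_X_pow_mul', if_neg (by omega)]

section Rees

variable {k A B : Type*} [CommSemiring k] [Semiring A] [Algebra k A] [Semiring B] [Module k B]
  (F : ℕ → Submodule k A)

/-- The Rees module `⊕ F_t X^t`. When each `ψ t` restricts to the symbol map `F_t → gr_t(A)`,
`lsum ψ` restricts on it to the symbol map to `gr(A)`. -/
def reesModule : Submodule k A[X] where
  carrier := {P | ∀ t, P.coeff t ∈ F t}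
  add_mem' hP hQ t := by simpa using add_mem (hP t) (hQ t)
  zero_mem' t := by simp
  smul_mem' c P hP t := by simpa using Submodule.smul_mem _ c (hP t)

variable {F}

theorem monomial_mem_reesModule {n : ℕ} {x : A} (hx : x ∈ F n) : monomial n x ∈ reesModule F := by
  intro t
  rw [coeff_monomial]
  split_ifs with h
  · exact h ▸ hx
  · exact zero_mem _

theorem mul_mem_reesModule (hmulF : ∀ i j : ℕ, ∀ x ∈ F i, ∀ y ∈ F j, x * y ∈ F (i + j))
    {P Q : A[X]} (hP : P ∈ reesModule F) (hQ : Q ∈ reesModule F) : P * Q ∈ reesModule F := by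
  intro t
  rw [coeff_mul]
  exact Submodule.sum_mem _ fun q hq =>
    Finset.HasAntidiagonal.mem_antidiagonal.mp hq ▸ hmulF _ _ _ (hP q.1) _ (hQ q.2)

theorem pow_succ_mem_reesModule (hmulF : ∀ i j : ℕ, ∀ x ∈ F i, ∀ y ∈ F j, x * y ∈ F (i + j))
    {P : A[X]} (hP : P ∈ reesModule F) (n : ℕ) : P ^ (n + 1) ∈ reesModule F := by
  induction n with
  | zero => simpa using hP
  | succ n ih => exact pow_succ P (n + 1) ▸ mul_mem_reesModule hmulF ih hP

variable (ψ : ℕ → A →ₗ[k] B)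

theorem lsum_mul_of_mem_reesModule
    (hψmul : ∀ p q : ℕ, ∀ x ∈ F p, ∀ y ∈ F q, ψ (p + q) (x * y) = ψ p x * ψ q y)
    {P Q : A[X]} (hP : P ∈ reesModule F) (hQ : Q ∈ reesModule F) :
    lsum ψ (P * Q) = lsum ψ P * lsum ψ Q := by
  rw [mul_eq_sum_sum, map_sum, lsum_apply, lsum_apply, sum_def, sum_def, Finset.sum_mul_sum]
  refine Finset.sum_congr rfl fun i _ => ?_
  rw [sum_def, map_sum]
  refine Finset.sum_congr rfl fun j _ => ?_
  rw [lsum_apply, sum_monomial_index _ _ (ψ _).map_zero, hψmul _ _ _ (hP i) _ (hQ j)]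

theorem lsum_pow_succ_of_mem_reesModule
    (hmulF : ∀ i j : ℕ, ∀ x ∈ F i, ∀ y ∈ F j, x * y ∈ F (i + j))
    (hψmul : ∀ p q : ℕ, ∀ x ∈ F p, ∀ y ∈ F q, ψ (p + q) (x * y) = ψ p x * ψ q y)
    {P : A[X]} (hP : P ∈ reesModule F) (n : ℕ) : lsum ψ (P ^ (n + 1)) = lsum ψ P ^ (n + 1) := by
  induction n with
  | zero => simp
  | succ n ih =>
    rw [pow_succ, lsum_mul_of_mem_reesModule ψ hψmul (pow_succ_mem_reesModule hmulF hP n) hP, ih,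
      ← pow_succ]

theorem lsum_eq_zero_of_coeff_succ_mem (hψker : ∀ n, ∀ x ∈ F n, ψ (n + 1) x = 0) {P : A[X]}
    (h0 : P.coeff 0 = 0) (h : ∀ t, P.coeff (t + 1) ∈ F t) : lsum ψ P = 0 := by
  rw [lsum_apply, sum_def]
  refine Finset.sum_eq_zero fun t _ => ?_
  cases t with
  | zero => rw [h0, map_zero]
  | succ t => exact hψker t _ (h t)

theorem exists_mem_reesModule_lsum_eq {b : B} (hb : b ∈ ⨆ n, (F (n + 1)).map (ψ (n + 1))) :
    ∃ P ∈ reesModule F, P.coeff 0 = 0 ∧ lsum ψ P = b := by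
  induction hb using Submodule.iSup_induction' with
  | mem n b hb =>
    obtain ⟨x, hx, rfl⟩ := hb
    exact ⟨monomial (n + 1) x, monomial_mem_reesModule hx, by simp, by simp⟩
  | zero => exact ⟨0, zero_mem _, coeff_zero 0, map_zero _⟩
  | add b c _ _ hb hc =>
    obtain ⟨P, hP, hP0, rfl⟩ := hb
    obtain ⟨Q, hQ, hQ0, rfl⟩ := hc
    exact ⟨P + Q, add_mem hP hQ, by simp [hP0, hQ0], map_add _ _ _⟩

end Rees

section ScalarEval

variable {k A : Type*} [CommSemiring k] [Semiring A] [Algebra k A]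

def evalScalar (l : k) : A[X] →+* A :=
  eval₂RingHom' (RingHom.id A) (algebraMap k A l) fun a => Algebra.commute_algebraMap_right l a

theorem evalScalar_apply (l : k) (P : A[X]) : evalScalar l P = P.sum fun i a => l ^ i • a := by
  change eval₂ _ _ P = _
  simp only [eval₂_eq_sum, RingHom.id_apply, ← map_pow, ← Algebra.commutes, Algebra.smul_def]

theorem evalScalar_mem_of_mem_reesModule {F : ℕ → Submodule k A} (hmono : Monotone F)
    {P : A[X]} (hP : P ∈ reesModule F) (l : k) : evalScalar l P ∈ F P.natDegree := by
  rw [evalScalar_apply, sum_def]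
  exact Submodule.sum_mem _ fun i hi =>
    Submodule.smul_mem _ _ (hmono (le_natDegree_of_mem_supp i hi) (hP i))

end ScalarEval

theorem coeff_mem_of_forall_evalScalar_mem {k A : Type*} [Field k] [Ring A] [Algebra k A]
    {S : Set k} (hS : S.Infinite) {W : Submodule k A} {P : A[X]}
    (h : ∀ l ∈ S, evalScalar l P ∈ W) (t : ℕ) : P.coeff t ∈ W := by
  by_contra ht
  obtain ⟨f, hft, hfW⟩ := W.exists_dual_map_eq_bot_of_notMem ht inferInstance
  have hf : W ≤ LinearMap.ker f := LinearMap.le_ker_iff_map.mpr hfW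
  let q : k[X] := ∑ i ∈ P.support, monomial i (f (P.coeff i))
  have hq : q = 0 := by
    refine eq_zero_of_infinite_isRoot q (hS.mono fun l hl => ?_)
    have := LinearMap.mem_ker.mp (hf (h l hl))
    simp only [evalScalar_apply, sum_def, map_sum, map_smul, smul_eq_mul] at this
    simpa [q, IsRoot, eval_finsetSum, mul_comm] using this
  have hqt : q.coeff t = f (P.coeff t) := by
    simp only [q, finsetSum_coeff, coeff_monomial, Finset.sum_ite_eq']
    split_ifs with h0
    · rfl
    · rw [notMem_support_iff.mp h0, map_zero]
  exact hft (by rw [← hqt, hq, coeff_zero])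

theorem isNilpotent_lsum_of_mem_reesModule {k A B : Type*} [Field k] [Uncountable k] [Ring A]
    [Algebra k A] [Semiring B] [Module k B] {F : ℕ → Submodule k A} (hmono : Monotone F)
    (hmulF : ∀ i j : ℕ, ∀ x ∈ F i, ∀ y ∈ F j, x * y ∈ F (i + j))
    (halg : ∀ a : A, ∃ d : ℕ, a ^ d ∈ Submodule.span k ((fun i : ℕ => a ^ i) '' Set.Icc 1 (d - 1)))
    (ψ : ℕ → A →ₗ[k] B)
    (hψmul : ∀ p q : ℕ, ∀ x ∈ F p, ∀ y ∈ F q, ψ (p + q) (x * y) = ψ p x * ψ q y)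
    (hψker : ∀ n, ∀ x ∈ F n, ψ (n + 1) x = 0) {P : A[X]} (hP : P ∈ reesModule F)
    (hP0 : P.coeff 0 = 0) :
    IsNilpotent (lsum ψ P) := by
  set m := P.natDegree
  obtain ⟨d, hd⟩ := exists_infinite_setOf_of_uncountable fun l : k => halg (evalScalar l P)
  set N := m * (d - 1) + 1
  have hcoeff : ∀ t, (P ^ N).coeff t ∈ F (m * (d - 1)) :=
    coeff_mem_of_forall_evalScalar_mem hd fun l hl => by
      rw [map_pow]
      exact pow_mem_filtration_of_mem_span hmono hmulF
        (evalScalar_mem_of_mem_reesModule hmono hP l) hl (Nat.le_add_left 1 _)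
  refine ⟨N, ?_⟩
  rw [← lsum_pow_succ_of_mem_reesModule ψ hmulF hψmul hP]
  refine lsum_eq_zero_of_coeff_succ_mem ψ hψker (coeff_pow_eq_zero_of_lt hP0 (by omega)) fun t => ?_
  rcases lt_or_ge (t + 1) N with ht | ht
  · rw [coeff_pow_eq_zero_of_lt hP0 ht]
    exact zero_mem _
  · exact hmono (by omega) (hcoeff (t + 1))

theorem grading_of_filtered_algebraic_algebra_is_nil_general
    (k : Type*) [Field k] [Uncountable k]
    (A : Type*) [Ring A] [Algebra k A]
    (F : ℕ → Submodule k A)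
    (hmono : Monotone F)
    (hmulF : ∀ i j : ℕ, ∀ x ∈ F i, ∀ y ∈ F j, x * y ∈ F (i + j))
    (halg : ∀ a : A, ∃ d : ℕ, 1 ≤ d ∧
      a ^ d ∈ Submodule.span k ((fun i : ℕ => a ^ i) '' Set.Icc 1 (d - 1)))
    (B : Type*) [Ring B] [Algebra k B]
    (φ : ∀ n : ℕ, F n →ₗ[k] B)
    (hker : ∀ n : ℕ, ∀ x : F (n + 1), φ (n + 1) x = 0 ↔ (x : A) ∈ F n)
    (hmulφ : ∀ p q : ℕ, ∀ x : F p, ∀ y : F q,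
      φ p x * φ q y = φ (p + q) ⟨(x : A) * (y : A), hmulF p q _ x.2 _ y.2⟩) :
    ∀ b ∈ ⨆ n : ℕ, LinearMap.range (φ (n + 1)), IsNilpotent b := by
  intro b hb
  -- extending each `φ n` to all of `A` makes `lsum ψ` a linear map on `A[X]`
  choose ψ hext using fun n => LinearMap.exists_extend (φ n)
  have hψφ : ∀ n, ∀ x (hx : x ∈ F n), ψ n x = φ n ⟨x, hx⟩ :=
    fun n x hx => LinearMap.congr_fun (hext n) ⟨x, hx⟩
  simp only [← hext, LinearMap.range_comp, Submodule.range_subtype] at hb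
  obtain ⟨P, hP, hP0, rfl⟩ := exists_mem_reesModule_lsum_eq ψ hb
  refine isNilpotent_lsum_of_mem_reesModule hmono hmulF (fun a => (halg a).imp fun _ => And.right)
    ψ (fun p q x hx y hy => ?_) (fun n x hx => ?_) hP hP0
  · rw [hψφ _ _ hx, hψφ _ _ hy, hmulφ, hψφ _ _ (hmulF p q x hx y hy)]
  · rw [hψφ _ _ (hmono n.le_succ hx), hker]
    exact hx

/-- **Main theorem.** Let `k` be an uncountable field and `A` an associative `k`-algebra
equipped with a filtration `F_0 ⊆ F_1 ⊆ ⋯` (an increasing chain of `k`-subspaces with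
`⋃ F_i = A` and `F_i F_j ⊆ F_{i+j}`) such that every element of `A` is algebraic over
`k`.  Then every element of `gr(A)_{≥1}` is nilpotent.

Here the associated graded algebra `gr(A) = ⊕_{n≥0} F_n/F_{n−1}` (with `F_{−1} = 0`) is
presented by an algebra `B` together with `k`-linear maps `φ n : F n → B` realizing the
quotient maps `F_n → F_n/F_{n−1} ⊆ gr(A)`: the kernel of `φ n` is exactly `F_{n-1}`
(with `φ 0` injective), and `φ p x * φ q y = φ (p+q) (x*y)`, which encodes the
multiplication `(x + F_{p−1})(y + F_{q−1}) = xy + F_{p+q−1}` of `gr(A)`.  The part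
`gr(A)_{≥1} = ⊕_{n≥1} F_n/F_{n−1}` is then `⨆ n, range (φ (n+1))`. -/
theorem grading_of_filtered_algebraic_algebra_is_nil
    (k : Type*) [Field k] [Uncountable k]
    (A : Type*) [Ring A] [Algebra k A]
    (F : ℕ → Submodule k A)
    (hmono : Monotone F)
    (hexh : ∀ a : A, ∃ n : ℕ, a ∈ F n)
    (hmulF : ∀ i j : ℕ, ∀ x ∈ F i, ∀ y ∈ F j, x * y ∈ F (i + j))
    (halg : ∀ a : A, ∃ d : ℕ, 1 ≤ d ∧
      a ^ d ∈ Submodule.span k ((fun i : ℕ => a ^ i) '' Set.Icc 1 (d - 1)))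
    (B : Type*) [Ring B] [Algebra k B]
    (φ : ∀ n : ℕ, F n →ₗ[k] B)
    (hker0 : ∀ x : F 0, φ 0 x = 0 ↔ (x : A) = 0)
    (hker : ∀ n : ℕ, ∀ x : F (n + 1), φ (n + 1) x = 0 ↔ (x : A) ∈ F n)
    (hmulφ : ∀ p q : ℕ, ∀ x : F p, ∀ y : F q,
      φ p x * φ q y = φ (p + q) ⟨(x : A) * (y : A), hmulF p q _ x.2 _ y.2⟩) :
    ∀ b ∈ ⨆ n : ℕ, LinearMap.range (φ (n + 1)), IsNilpotent b :=
  grading_of_filtered_algebraic_algebra_is_nil_general k A F hmono hmulF halg B φ hker hmulφ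
end

section
/- Suppose |k| ≥ n+1. Then in k⟨x_1,…,x_m⟩, the k-span of the set {(α_1 x_1 + … + α_m x_m)^n : α_1, …, α_m ∈ k} is equal to P_n(x_1,…,x_m). -/
/-!
Expanding `(∑ α_j x_j)^n` and grouping the words by how often each letter occurs gives
`∑_{|d| = n} α^d p_d`, so every such power lies in `P_n`. Conversely, a linear functional `φ`
vanishing on all these powers makes `α ↦ ∑_d φ(p_d) α^d` the evaluation of a homogeneous
polynomial of degree `n` that vanishes on all of `k^m`; as `n ≤ |k|`, this polynomial is zero,
so `φ` kills every `p_d`.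
-/

/-- `pWord a i` is the polynomial `p_{i_1,…,i_m}(a_1,…,a_m)`: the sum, over all distinct
words in `m` letters containing exactly `i_j` occurrences of letter `j` for each `j`,
of the corresponding products of `a_1,…,a_m`. -/
noncomputable def pWord {A : Type*} [Ring A] {m : ℕ} (a : Fin m → A) (i : Fin m → ℕ) : A :=
  ∑ w ∈ (Finset.univ : Finset (Fin (∑ j, i j) → Fin m)).filter
      (fun w => ∀ j, (List.ofFn w).count j = i j),
    ((List.ofFn w).map a).prod

/-- `Pdeg k a n` is `P_n(a_1,…,a_m)`, the `k`-span of
`{p_{i_1,…,i_m}(a_1,…,a_m) : i_1+…+i_m = n}`. -/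
noncomputable def Pdeg (k : Type*) [Field k] {A : Type*} [Ring A] [Algebra k A]
    {m : ℕ} (a : Fin m → A) (n : ℕ) : Submodule k A :=
  Submodule.span k {x | ∃ i : Fin m → ℕ, (∑ j, i j) = n ∧ x = pWord a i}

open Finset Finset.Nat Cardinal

lemma pWord_eq_sum_filter {A : Type*} [Ring A] {m n : ℕ} (a : Fin m → A) {i : Fin m → ℕ}
    (hi : ∑ j, i j = n) :
    pWord a i = ∑ w ∈ (univ : Finset (Fin n → Fin m)).filter
      (fun w => ∀ j, (List.ofFn w).count j = i j), ((List.ofFn w).map a).prod := by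
  subst hi; rfl

lemma sum_pow_eq_sum_list_prod {A : Type*} [Semiring A] {m : ℕ} (a : Fin m → A) :
    ∀ n, (∑ j, a j) ^ n = ∑ w : Fin n → Fin m, ((List.ofFn w).map a).prod
  | 0 => by simp
  | n + 1 => by
    rw [pow_succ', sum_pow_eq_sum_list_prod a n, sum_mul_sum, ← Fintype.sum_prod_type']
    exact Fintype.sum_equiv (Fin.consEquiv fun _ => Fin m) _ _ fun w => by simp [List.ofFn_succ]

lemma List.prod_map_smul_eq_prod_pow_count_smul {R A ι : Type*} [CommSemiring R] [Semiring A]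
    [Algebra R A] [Fintype ι] [DecidableEq ι] (c : ι → R) (a : ι → A) (l : List ι) :
    (l.map fun j => c j • a j).prod = (∏ j, c j ^ l.count j) • (l.map a).prod := by
  induction l with
  | nil => simp
  | cons x l ih =>
    simp only [List.map_cons, List.prod_cons, ih, smul_mul_smul_comm, List.count_cons, pow_add,
      prod_mul_distrib, beq_iff_eq, pow_ite, pow_one, pow_zero, prod_ite_eq, mem_univ, if_true]
    rw [mul_comm]

lemma sum_count_ofFn {m n : ℕ} (w : Fin n → Fin m) : ∑ j, (List.ofFn w).count j = n := by
  simpa using Multiset.sum_count_eq_card (s := univ) (m := (List.ofFn w : Multiset (Fin m)))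
    fun a _ => mem_univ a

lemma pow_sum_smul_eq_sum_antidiagonalTuple {R A : Type*} [CommSemiring R] [Ring A]
    [Algebra R A] {m : ℕ} (α : Fin m → R) (a : Fin m → A) (n : ℕ) :
    (∑ j, α j • a j) ^ n = ∑ d ∈ antidiagonalTuple m n, (∏ j, α j ^ d j) • pWord a d := by
  classical
  simp_rw [sum_pow_eq_sum_list_prod, List.prod_map_smul_eq_prod_pow_count_smul]
  rw [← sum_fiberwise_of_maps_to (g := fun w j => (List.ofFn w).count j)
    fun w _ => mem_antidiagonalTuple.2 (sum_count_ofFn w)]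
  refine sum_congr rfl fun d hd => ?_
  rw [pWord_eq_sum_filter a (mem_antidiagonalTuple.1 hd), smul_sum]
  refine sum_congr (by simp [funext_iff]) fun w hw => ?_
  simp only [(mem_filter.1 hw).2]

lemma eq_zero_of_forall_sum_antidiagonalTuple_eq_zero {R : Type*} [CommRing R] [IsDomain R]
    {m n : ℕ} (hn : n ≤ #R) (c : (Fin m → ℕ) → R)
    (h : ∀ α : Fin m → R, ∑ d ∈ antidiagonalTuple m n, c d * ∏ j, α j ^ d j = 0)
    {d : Fin m → ℕ} (hd : ∑ j, d j = n) : c d = 0 := by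
  classical
  let toFinsupp := (Finsupp.equivFunOnFinite (α := Fin m) (M := ℕ)).symm
  let F : MvPolynomial (Fin m) R :=
    ∑ e ∈ antidiagonalTuple m n, MvPolynomial.monomial (toFinsupp e) (c e)
  have hF : F.IsHomogeneous n := by
    refine MvPolynomial.IsHomogeneous.sum _ _ _ fun e he => ?_
    refine MvPolynomial.isHomogeneous_monomial _ ?_
    simpa [Finsupp.degree_eq_sum, toFinsupp] using mem_antidiagonalTuple.1 he
  have hF0 : F = 0 := hF.eq_zero_of_forall_eval_eq_zero_of_le_card (fun α => by
    simpa [F, toFinsupp, MvPolynomial.eval_monomial, Finsupp.prod_fintype] using h α) hn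
  simpa [F, MvPolynomial.coeff_sum, MvPolynomial.coeff_monomial, toFinsupp,
    mem_antidiagonalTuple.2 hd] using congrArg (MvPolynomial.coeff (toFinsupp d)) hF0

lemma span_range_sum_antidiagonalTuple_smul {k V : Type*} [Field k] [AddCommGroup V] [Module k V]
    {m n : ℕ} (hn : n ≤ #k) (v : (Fin m → ℕ) → V) :
    Submodule.span k (Set.range fun α : Fin m → k =>
        ∑ d ∈ antidiagonalTuple m n, (∏ j, α j ^ d j) • v d)
      = Submodule.span k (v '' {d | ∑ j, d j = n}) := by
  apply le_antisymm
  · rw [Submodule.span_le]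
    rintro _ ⟨α, rfl⟩
    exact Submodule.sum_mem _ fun d hd => Submodule.smul_mem _ _
      (Submodule.subset_span ⟨d, mem_antidiagonalTuple.1 hd, rfl⟩)
  · set W := Submodule.span k (Set.range fun α : Fin m → k =>
      ∑ d ∈ antidiagonalTuple m n, (∏ j, α j ^ d j) • v d)
    rw [Submodule.span_le]
    rintro _ ⟨d, hd, rfl⟩
    by_contra hvd
    obtain ⟨φ, hφd, hφ⟩ := Submodule.exists_dual_map_eq_bot_of_notMem hvd inferInstance
    refine hφd (eq_zero_of_forall_sum_antidiagonalTuple_eq_zero hn (φ ∘ v) (fun α => ?_) hd)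
    have hα := Submodule.mem_map_of_mem (f := φ) (p := W) (Submodule.subset_span ⟨α, rfl⟩)
    simpa [hφ, mul_comm] using hα

lemma Pdeg_eq_span_image (k : Type*) [Field k] {A : Type*} [Ring A] [Algebra k A] {m : ℕ}
    (a : Fin m → A) (n : ℕ) : Pdeg k a n = Submodule.span k (pWord a '' {d | ∑ j, d j = n}) := by
  simp only [Pdeg, Set.image, Set.mem_ofPred_eq, eq_comm]

/-- If `|k| ≥ n+1`, then in `k⟨x_1,…,x_m⟩` the span of the `n`-th powers of the linear
forms `α_1 x_1 + … + α_m x_m` equals `P_n(x_1,…,x_m)`. -/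
theorem span_pow_linear_eq_Pdeg
    (k : Type*) [Field k] (m n : ℕ) (hcard : (n + 1 : Cardinal) ≤ Cardinal.mk k) :
    Submodule.span k
        {f : FreeAlgebra k (Fin m) | ∃ α : Fin m → k, f = (∑ j, α j • FreeAlgebra.ι k j) ^ n}
      = Pdeg k (fun j => FreeAlgebra.ι k j) n := by
  have hn : (n : Cardinal) ≤ #k := le_trans (by exact_mod_cast n.le_succ) hcard
  have hpowers : {f : FreeAlgebra k (Fin m) | ∃ α : Fin m → k,
      f = (∑ j, α j • FreeAlgebra.ι k j) ^ n} = Set.range fun α : Fin m → k =>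
        ∑ d ∈ antidiagonalTuple m n, (∏ j, α j ^ d j) • pWord (fun j => FreeAlgebra.ι k j) d := by
    ext f
    simp only [pow_sum_smul_eq_sum_antidiagonalTuple, Set.mem_ofPred_eq, Set.mem_range, eq_comm]
  rw [hpowers, Pdeg_eq_span_image, span_range_sum_antidiagonalTuple_smul hn]
end

section
/- Let A be an associative k-algebra and a_1, …, a_m ∈ A. If P_{≤ M_{d,m}}(a_1,…,a_m) ⊆ P_{≤ d−1}(a_1,…,a_m) for some d ≥ 1, then every element of the subspace k a_1 + … + k a_m is algebraic of degree at most M_{d,m}. -/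
open Finset

theorem List.prod_map_smul {ι M N : Type*} [Monoid M] [Monoid N] [MulAction M N]
    [IsScalarTower M N N] [SMulCommClass M N N] (c : ι → M) (f : ι → N) (l : List ι) :
    (l.map fun x => c x • f x).prod = (l.map c).prod • (l.map f).prod := by
  induction l with
  | nil => simp
  | cons x l ih => simp only [List.map_cons, List.prod_cons, ih, smul_mul_smul_comm]

theorem Fintype.prod_list_map_count {ι M : Type*} [Fintype ι] [DecidableEq ι] [CommMonoid M]
    (c : ι → M) (l : List ι) : (l.map c).prod = ∏ j, c j ^ l.count j := by
  rw [Finset.prod_list_map_count]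
  refine Finset.prod_subset (Finset.subset_univ _) fun j _ hj => ?_
  rw [List.count_eq_zero.2 (mt List.mem_toFinset.2 hj), pow_zero]

theorem Fintype.sum_list_count {ι : Type*} [Fintype ι] [DecidableEq ι] (l : List ι) :
    ∑ j, l.count j = l.length := by
  simpa using Multiset.sum_count_eq_card (s := Finset.univ) (m := (l : Multiset ι)) (by simp)

theorem Fintype.sum_pow_eq_sum_prod_ofFn {ι A : Type*} [Fintype ι] [Semiring A] (x : ι → A)
    (n : ℕ) : (∑ j, x j) ^ n = ∑ w : Fin n → ι, ((List.ofFn w).map x).prod := by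
  induction n with
  | zero => simp
  | succ n ih =>
    rw [pow_succ', ih, Finset.sum_mul_sum, ← (Fin.consEquiv fun _ => ι).sum_comp,
      Fintype.sum_prod_type]
    simp [List.ofFn_succ, Fin.cons_succ]

section Multinomial

variable {k A : Type*} [Field k] [Ring A] [Algebra k A] {m : ℕ}

theorem pWord_eq_sum_of_sum_eq (a : Fin m → A) {i : Fin m → ℕ} {n : ℕ} (h : ∑ j, i j = n) :
    pWord a i = ∑ w ∈ (univ : Finset (Fin n → Fin m)).filter
      (fun w => ∀ j, (List.ofFn w).count j = i j), ((List.ofFn w).map a).prod := by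
  subst h; rfl

theorem sum_smul_pow_eq_sum_pWord (c : Fin m → k) (a : Fin m → A) (n : ℕ) :
    (∑ j, c j • a j) ^ n =
      ∑ i ∈ Nat.antidiagonalTuple m n, (∏ j, c j ^ i j) • pWord a i := by
  classical
  set count : (Fin n → Fin m) → Fin m → ℕ := fun w j => (List.ofFn w).count j
  have hcount : ∀ w ∈ (univ : Finset (Fin n → Fin m)), count w ∈ Nat.antidiagonalTuple m n :=
    fun w _ => Nat.mem_antidiagonalTuple.2 (by rw [Fintype.sum_list_count, List.length_ofFn])
  rw [Fintype.sum_pow_eq_sum_prod_ofFn, ← Finset.sum_fiberwise_of_maps_to hcount]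
  refine Finset.sum_congr rfl fun i hi => ?_
  rw [pWord_eq_sum_of_sum_eq a (Nat.mem_antidiagonalTuple.1 hi), Finset.smul_sum]
  simp only [count, funext_iff]
  refine Finset.sum_congr rfl fun w hw => ?_
  rw [List.prod_map_smul, Fintype.prod_list_map_count]
  simp only [(Finset.mem_filter.1 hw).2]

theorem pow_mem_Pdeg {a : Fin m → A} {u : A} (hu : u ∈ Submodule.span k (Set.range a)) (n : ℕ) :
    u ^ n ∈ Pdeg k a n := by
  obtain ⟨c, rfl⟩ := (Submodule.mem_span_range_iff_exists_fun k).1 hu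
  rw [sum_smul_pow_eq_sum_pWord]
  exact Submodule.sum_mem _ fun i hi =>
    Submodule.smul_mem _ _ (Submodule.subset_span ⟨i, Nat.mem_antidiagonalTuple.1 hi, rfl⟩)

end Multinomial

theorem Submodule.exists_eq_succ_of_finrank_lt {K V : Type*} [DivisionRing K] [AddCommGroup V]
    [Module K V] {W : ℕ → Submodule K V} (hW : Monotone W) {M : ℕ} [FiniteDimensional K (W M)]
    (h : Module.finrank K (W M) < M) : ∃ t < M, W t = W (t + 1) := by
  by_contra! hne
  have finrank_ge : ∀ t ≤ M, t ≤ Module.finrank K (W t) := by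
    intro t ht
    induction t with
    | zero => exact Nat.zero_le _
    | succ t ih =>
      have : FiniteDimensional K (W (t + 1)) := Submodule.finiteDimensional_of_le (hW ht)
      have := Submodule.finrank_lt_finrank_of_lt ((hW (by omega)).lt_of_ne (hne t (by omega)))
      have := ih (by omega)
      omega
  exact absurd (finrank_ge M le_rfl) (by omega)

section PowSpan

variable (k : Type*) {A : Type*} [CommSemiring k] [Semiring A] [Algebra k A]

noncomputable def powSpan (u : A) (n : ℕ) : Submodule k A :=
  Submodule.span k ((fun i : ℕ => u ^ i) '' Set.Icc 1 n)

variable {k} {u : A}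

theorem powSpan_mono : Monotone (powSpan k u) := fun _ _ hst =>
  Submodule.span_mono (Set.image_mono (Set.Icc_subset_Icc_right hst))

theorem powSpan_le_iff {n : ℕ} {V : Submodule k A} :
    powSpan k u n ≤ V ↔ ∀ i, 1 ≤ i → i ≤ n → u ^ i ∈ V := by
  simp only [powSpan, Submodule.span_le, Set.subset_def, Set.forall_mem_image, Set.mem_Icc,
    SetLike.mem_coe, and_imp]

theorem pow_mem_powSpan {i n : ℕ} (h1 : 1 ≤ i) (hi : i ≤ n) : u ^ i ∈ powSpan k u n :=
  Submodule.subset_span ⟨i, ⟨h1, hi⟩, rfl⟩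

theorem mul_mem_powSpan_of_eq_succ {t : ℕ} (h : powSpan k u t = powSpan k u (t + 1)) {x : A}
    (hx : x ∈ powSpan k u t) : u * x ∈ powSpan k u t := by
  suffices powSpan k u t ≤ (powSpan k u t).comap (LinearMap.mulLeft k u) from this hx
  refine powSpan_le_iff.2 fun i h1 hi => ?_
  rw [Submodule.mem_comap, LinearMap.mulLeft_apply, ← pow_succ', h]
  exact pow_mem_powSpan (by omega) (by omega)

theorem pow_mem_powSpan_of_eq_succ {t : ℕ} (h : powSpan k u t = powSpan k u (t + 1)) {n : ℕ}
    (hn : 1 ≤ n) : u ^ n ∈ powSpan k u t := by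
  induction n, hn using Nat.le_induction with
  | base => exact h ▸ pow_mem_powSpan le_rfl (by omega)
  | succ n _ ih => exact pow_succ' u n ▸ mul_mem_powSpan_of_eq_succ h ih

end PowSpan

theorem pow_mem_powSpan_pred_of_finrank_lt {k A : Type*} [Field k] [Ring A] [Algebra k A]
    {u : A} {V : Submodule k A} [FiniteDimensional k V] {M : ℕ}
    (hV : Module.finrank k V < M) (hu : ∀ n, 1 ≤ n → n ≤ M → u ^ n ∈ V) :
    u ^ M ∈ powSpan k u (M - 1) := by
  have hWV : powSpan k u M ≤ V := powSpan_le_iff.2 hu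
  have : FiniteDimensional k (powSpan k u M) := Submodule.finiteDimensional_of_le hWV
  obtain ⟨t, htM, ht⟩ := Submodule.exists_eq_succ_of_finrank_lt powSpan_mono
    ((Submodule.finrank_mono hWV).trans_lt hV)
  exact powSpan_mono (by omega) (pow_mem_powSpan_of_eq_succ ht (by omega))

/-- Exponent vectors of total degree at most `n`: forgetting the slack coordinate `0` of a
multiset of size `n` on `Fin (m + 1)` (stars and bars). -/
noncomputable def exponentsSumLE (m n : ℕ) : Finset (Fin m → ℕ) :=
  univ.image fun s : Sym (Fin (m + 1)) n =>
    Fin.tail (Sym.equivNatSumOfFintype (Fin (m + 1)) n s : Fin (m + 1) → ℕ)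

theorem mem_exponentsSumLE_of_sum_le {m n : ℕ} {i : Fin m → ℕ} (h : ∑ j, i j ≤ n) :
    i ∈ exponentsSumLE m n := by
  have hsum : ∑ j, (Fin.cons (n - ∑ j, i j) i : Fin (m + 1) → ℕ) j = n := by
    rw [Fin.sum_cons]; omega
  refine mem_image.2 ⟨(Sym.equivNatSumOfFintype _ n).symm ⟨_, hsum⟩, mem_univ _, ?_⟩
  rw [Equiv.apply_symm_apply, Fin.tail_cons]

theorem card_exponentsSumLE_le (m n : ℕ) : #(exponentsSumLE m n) ≤ (n + m).choose m := by
  refine card_image_le.trans ?_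
  rw [card_univ, Sym.card_sym_eq_choose, Fintype.card_fin, show m + 1 + n - 1 = n + m by omega,
    Nat.choose_symm_add]

theorem iSup_Pdeg_le_span_pWord (k : Type*) [Field k] {A : Type*} [Ring A] [Algebra k A] {m : ℕ}
    (a : Fin m → A) (N : ℕ) :
    ⨆ n ∈ Icc 1 N, Pdeg k a n ≤
      Submodule.span k (Set.range fun i : (exponentsSumLE m N).erase 0 => pWord a i) := by
  refine iSup₂_le fun n hn => Submodule.span_le.2 ?_
  rintro _ ⟨i, hi, rfl⟩
  have hi0 : i ≠ 0 := by
    rintro rfl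
    simp only [Pi.zero_apply, sum_const_zero] at hi
    exact absurd (mem_Icc.1 hn).1 (by omega)
  exact Submodule.subset_span
    ⟨⟨i, mem_erase.2 ⟨hi0, mem_exponentsSumLE_of_sum_le (hi ▸ (mem_Icc.1 hn).2)⟩⟩, rfl⟩

/-- If `P_{≤ M_{d,m}}(a_1,…,a_m) ⊆ P_{≤ d−1}(a_1,…,a_m)` for some `d ≥ 1`, where
`M_{d,m} = C(d+m−1, m)`, then every element of the subspace `k a_1 + … + k a_m` is
algebraic of degree at most `M_{d,m}`. -/
theorem algebraic_of_Ple_M_le_Ple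
    (k : Type*) [Field k] (A : Type*) [Ring A] [Algebra k A]
    (m d : ℕ) (hd : 1 ≤ d) (a : Fin m → A)
    (h : (⨆ n ∈ Finset.Icc 1 ((d + m - 1).choose m), Pdeg k a n) ≤
      ⨆ n ∈ Finset.Icc 1 (d - 1), Pdeg k a n) :
    ∀ u ∈ Submodule.span k (Set.range a),
      u ^ ((d + m - 1).choose m) ∈
        Submodule.span k ((fun i : ℕ => u ^ i) '' Set.Icc 1 ((d + m - 1).choose m - 1)) := by
  intro u hu
  set S := (exponentsSumLE m (d - 1)).erase 0
  have hS : Fintype.card S < (d + m - 1).choose m := calc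
    Fintype.card S = #S := Fintype.card_coe S
    _ < #(exponentsSumLE m (d - 1)) :=
      card_erase_lt_of_mem (mem_exponentsSumLE_of_sum_le (by simp))
    _ ≤ (d + m - 1).choose m := by
      simpa [show d - 1 + m = d + m - 1 by omega] using card_exponentsSumLE_le m (d - 1)
  have := FiniteDimensional.span_of_finite k (Set.finite_range fun i : S => pWord a i)
  refine pow_mem_powSpan_pred_of_finrank_lt ((finrank_range_le_card _).trans_lt hS)
    fun n hn1 hnM => iSup_Pdeg_le_span_pWord k a (d - 1) (h ?_)
  exact le_iSup₂ (f := fun n _ => Pdeg k a n) n (mem_Icc.2 ⟨hn1, hnM⟩) (pow_mem_Pdeg hu n)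
end

section
/- Let k be an infinite field and let A be an associative k-algebra with filtration {F_n}_{n≥0}, and let B = gr(A) be the associated graded algebra. If A is locally of bounded degree (LBD), then gr(A)_{≥1} is locally of bounded index (LBI). -/
/-!
Encode `s ∈ gr(A)_{≥1}` as the symbol of an element `p = ∑ aₙ tⁿ` of the positive part of the
Rees algebra (`aₙ ∈ Fₙ`, `a₀ = 0`); the symbol map is multiplicative there, so `s^N` is the symbol
of `p^N`. A finite-dimensional `S` lifts to finitely many such `p`, of degree `≤ M` and with
coefficients in a finite-dimensional `W ⊆ A`. For `c ∈ k` the specialization `p(c)` lies in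
`W ∩ F_M`, so by LBD every power of `p(c)` is a combination of `p(c), …, p(c)^(d-1)` and lies in
`F_K`, `K = (d-1)M`. As `k` is infinite, a Vandermonde argument passes from the values
`p(c)^(K+1) = p^(K+1)(c)` to the coefficients: all coefficients of `p^(K+1)` lie in `F_K`, while
those of `t^e`, `e ≤ K`, vanish. Hence each coefficient of `t^e` in `p^(K+1)` lies in `F_(e-1)`,
and its symbol `s^(K+1)` is zero.
-/

open Polynomial

theorem Submodule.exists_fg_le_map_of_fg_of_le_map {R M N : Type*} [Semiring R]
    [AddCommMonoid M] [Module R M] [AddCommMonoid N] [Module R N] {f : M →ₗ[R] N}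
    {S : Submodule R N} (hS : S.FG) {P : Submodule R M} (hSP : S ≤ P.map f) :
    ∃ U ≤ P, U.FG ∧ S ≤ U.map f := by
  classical
  obtain ⟨G, rfl⟩ := hS
  choose! u hu hfu using fun g (hg : g ∈ G) => Submodule.mem_map.mp (hSP (subset_span hg))
  refine ⟨span R (u '' G), span_le.mpr (Set.image_subset_iff.mpr hu),
    ⟨G.image u, by simp⟩, ?_⟩
  rw [Submodule.map_span, Set.image_image]
  exact span_mono fun g hg => ⟨g, hg, hfu g hg⟩

theorem Submodule.mem_of_forall_sum_pow_smul_mem {k V : Type*} [Field k] [Infinite k]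
    [AddCommGroup V] [Module k V] (P : Submodule k V) {v : ℕ → V} {L : ℕ}
    (h : ∀ c : k, ∑ e ∈ Finset.range L, c ^ e • v e ∈ P) {e : ℕ} (he : e < L) : v e ∈ P := by
  rw [← Subspace.forall_mem_dualAnnihilator_apply_eq_zero_iff]
  intro f hf
  set q : k[X] := ∑ i ∈ Finset.range L, monomial i (f (v i))
  have hq : q = 0 := Polynomial.funext fun c => by
    simpa [q, eval_finsetSum, mul_comm] using (mem_dualAnnihilator f).mp hf _ (h c)
  simpa [q, finsetSum_coeff, coeff_monomial, he] using congr_arg (coeff · e) hq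

theorem pow_mem_span_pow_Icc_s16 {k A : Type*} [CommSemiring k] [Semiring A] [Algebra k A]
    {x : A} {d : ℕ} (hd : 1 ≤ d)
    (hx : x ^ d ∈ Submodule.span k ((x ^ ·) '' Set.Icc 1 (d - 1))) :
    ∀ N, 1 ≤ N → x ^ N ∈ Submodule.span k ((x ^ ·) '' Set.Icc 1 (d - 1)) := by
  set P := Submodule.span k ((x ^ ·) '' Set.Icc 1 (d - 1))
  have pow_mem : ∀ i, 1 ≤ i → i ≤ d → x ^ i ∈ P := fun i hi hid => by
    rcases hid.lt_or_eq with hid | rfl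
    · exact Submodule.subset_span ⟨i, ⟨hi, by omega⟩, rfl⟩
    · exact hx
  have mul_mem : ∀ y ∈ P, y * x ∈ P := fun y hy => by
    induction hy using Submodule.span_induction with
    | mem y hy =>
      obtain ⟨i, ⟨hi, hid⟩, rfl⟩ := hy
      exact pow_succ x i ▸ pow_mem (i + 1) (by omega) (by omega)
    | zero => simp
    | add a b _ _ ha hb => rw [add_mul]; exact add_mem ha hb
    | smul c a _ ha => rw [smul_mul_assoc]; exact P.smul_mem c ha
  intro N hN
  induction N, hN using Nat.le_induction with
  | base => exact pow_one x ▸ pow_mem 1 le_rfl hd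
  | succ N _ ih => exact pow_succ x N ▸ mul_mem _ ih

namespace Polynomial

variable {k A : Type*} [Field k] [Ring A] [Algebra k A]

variable (A) in
noncomputable def scalarEval (c : k) : A[X] →+* A :=
  eval₂RingHom' (RingHom.id A) (algebraMap k A c) fun a => Algebra.commute_algebraMap_right c a

theorem scalarEval_eq_sum_range (c : k) {p : A[X]} {n : ℕ} (hn : p.natDegree < n) :
    scalarEval A c p = ∑ e ∈ Finset.range n, c ^ e • p.coeff e := by
  change eval₂ _ _ p = _
  simp only [eval₂_eq_sum_range' _ hn, RingHom.id_apply, ← map_pow, Algebra.smul_def,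
    Algebra.commutes]

theorem exists_natDegree_le_coeff_mem_of_fg {U : Submodule k A[X]} (hU : U.FG) :
    ∃ M : ℕ, ∃ W : Submodule k A, FiniteDimensional k W ∧
      ∀ p ∈ U, p.natDegree ≤ M ∧ ∀ e, p.coeff e ∈ W := by
  classical
  obtain ⟨G, rfl⟩ := hU
  refine ⟨G.sup natDegree, Submodule.span k (G.biUnion coeffs : Set A), inferInstance,
    fun p hp => ⟨?_, fun e => ?_⟩⟩
  · induction hp using Submodule.span_induction with
    | mem g hg => exact Finset.le_sup hg
    | zero => simp
    | add p q _ _ hp hq => exact natDegree_add_le_of_degree_le hp hq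
    | smul c p _ hp => exact (natDegree_smul_le c p).trans hp
  · refine Submodule.span_le.mpr ?_
      (Submodule.apply_mem_span_image_of_mem_span ((lcoeff A e).restrictScalars k) hp)
    rintro _ ⟨g, hg, rfl⟩
    by_cases h0 : g.coeff e = 0
    · simp [h0]
    · exact Submodule.subset_span (Finset.mem_biUnion.mpr ⟨g, hg, coeff_mem_coeffs h0⟩)

theorem coeff_pow_eq_zero_of_coeff_zero_eq_zero {R : Type*} [Semiring R] {p : R[X]}
    (hp : p.coeff 0 = 0) {N e : ℕ} (he : e < N) : (p ^ N).coeff e = 0 := by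
  obtain ⟨q, rfl⟩ := X_dvd_iff.mpr hp
  rw [(commute_X q).mul_pow, coeff_X_pow_mul', if_neg (by omega)]

end Polynomial

section Filtration

variable {k A B : Type*} [Field k] [Ring A] [Algebra k A] [Ring B] [Algebra k B]
variable (F : ℕ → Submodule k A)

theorem pow_mem_filtration (hmulF : ∀ i j : ℕ, ∀ x ∈ F i, ∀ y ∈ F j, x * y ∈ F (i + j))
    {x : A} {m : ℕ} (hx : x ∈ F m) : ∀ i, 1 ≤ i → x ^ i ∈ F (i * m) := by
  intro i hi
  induction i, hi using Nat.le_induction with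
  | base => simpa using hx
  | succ i _ ih => simpa [pow_succ, add_mul] using hmulF _ _ _ ih _ hx

/-- The positive part `⊕_{n ≥ 1} Fₙ tⁿ` of the Rees algebra, inside `A[t]`. -/
def posRees : Submodule k A[X] where
  carrier := {p | p.coeff 0 = 0 ∧ ∀ e, p.coeff e ∈ F e}
  add_mem' hp hq := ⟨by simp [hp.1, hq.1], fun e => by simpa using add_mem (hp.2 e) (hq.2 e)⟩
  zero_mem' := ⟨rfl, fun e => by simp⟩
  smul_mem' c p hp := ⟨by simp [hp.1], fun e => by simpa using (F e).smul_mem c (hp.2 e)⟩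

theorem mul_mem_posRees (hmulF : ∀ i j : ℕ, ∀ x ∈ F i, ∀ y ∈ F j, x * y ∈ F (i + j))
    {p q : A[X]} (hp : p ∈ posRees F) (hq : q ∈ posRees F) : p * q ∈ posRees F := by
  refine ⟨by simp [mul_coeff_zero, hp.1], fun e => ?_⟩
  rw [coeff_mul]
  refine sum_mem fun ij hij => ?_
  rw [← Finset.HasAntidiagonal.mem_antidiagonal.mp hij]
  exact hmulF _ _ _ (hp.2 _) _ (hq.2 _)

variable (φ : ∀ n : ℕ, F n →ₗ[k] B)

/-- `φ e` is extended to `A` through an arbitrary linear retraction `A → F e`; only its values on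
`F e` ever matter. -/
noncomputable def symbolMap : A[X] →ₗ[k] B :=
  lsum fun e => φ e ∘ₗ (F e).subtype.leftInverse

theorem symbolMap_monomial {n : ℕ} {a : A} (ha : a ∈ F n) :
    symbolMap F φ (monomial n a) = φ n ⟨a, ha⟩ := by
  rw [symbolMap, lsum_apply, sum_monomial_index _ _ (by simp), LinearMap.comp_apply]
  exact congr_arg (φ n) (LinearMap.leftInverse_apply_of_inj (F n).ker_subtype ⟨a, ha⟩)

theorem symbolMap_mul (hmulF : ∀ i j : ℕ, ∀ x ∈ F i, ∀ y ∈ F j, x * y ∈ F (i + j))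
    (hmulφ : ∀ p q : ℕ, ∀ x : F p, ∀ y : F q,
      φ p x * φ q y = φ (p + q) ⟨(x : A) * (y : A), hmulF p q _ x.2 _ y.2⟩)
    {p q : A[X]} (hp : p ∈ posRees F) (hq : q ∈ posRees F) :
    symbolMap F φ (p * q) = symbolMap F φ p * symbolMap F φ q := by
  conv_lhs => rw [p.as_sum_support, q.as_sum_support, Finset.sum_mul_sum]
  conv_rhs => rw [p.as_sum_support, q.as_sum_support, map_sum, map_sum, Finset.sum_mul_sum]
  simp only [map_sum, monomial_mul_monomial, symbolMap_monomial F φ (hp.2 _),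
    symbolMap_monomial F φ (hq.2 _), symbolMap_monomial F φ (hmulF _ _ _ (hp.2 _) _ (hq.2 _)),
    hmulφ]

theorem symbolMap_pow_succ (hmulF : ∀ i j : ℕ, ∀ x ∈ F i, ∀ y ∈ F j, x * y ∈ F (i + j))
    (hmulφ : ∀ p q : ℕ, ∀ x : F p, ∀ y : F q,
      φ p x * φ q y = φ (p + q) ⟨(x : A) * (y : A), hmulF p q _ x.2 _ y.2⟩)
    {p : A[X]} (hp : p ∈ posRees F) (N : ℕ) :
    p ^ (N + 1) ∈ posRees F ∧ symbolMap F φ (p ^ (N + 1)) = symbolMap F φ p ^ (N + 1) := by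
  induction N with
  | zero => simpa using hp
  | succ N ih =>
    rw [pow_succ p, pow_succ (symbolMap F φ p), symbolMap_mul F φ hmulF hmulφ ih.1 hp, ih.2]
    exact ⟨mul_mem_posRees F hmulF ih.1 hp, rfl⟩

theorem symbolMap_eq_zero (hker : ∀ n : ℕ, ∀ x : F (n + 1), φ (n + 1) x = 0 ↔ (x : A) ∈ F n)
    {p : A[X]} (hp : p ∈ posRees F) (hlow : ∀ e, p.coeff (e + 1) ∈ F e) :
    symbolMap F φ p = 0 := by
  rw [p.as_sum_support, map_sum]
  refine Finset.sum_eq_zero fun e he => ?_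
  obtain ⟨n, rfl⟩ := Nat.exists_eq_succ_of_ne_zero fun h0 => mem_support_iff.mp (h0 ▸ he) hp.1
  rw [symbolMap_monomial F φ (hp.2 _)]
  exact (hker n _).mpr (hlow n)

theorem iSup_range_le_map_symbolMap :
    ⨆ n : ℕ, LinearMap.range (φ (n + 1)) ≤ (posRees F).map (symbolMap F φ) := by
  refine iSup_le fun n => ?_
  rintro _ ⟨x, rfl⟩
  refine ⟨monomial (n + 1) (x : A), ⟨by simp, fun e => ?_⟩, symbolMap_monomial F φ x.2⟩
  rw [coeff_monomial]
  split_ifs with h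
  · exact h ▸ x.2
  · exact zero_mem _

end Filtration

theorem coeff_pow_mem_filtration {k A : Type*} [Field k] [Infinite k] [Ring A] [Algebra k A]
    {F : ℕ → Submodule k A} (hmono : Monotone F)
    (hmulF : ∀ i j : ℕ, ∀ x ∈ F i, ∀ y ∈ F j, x * y ∈ F (i + j))
    {W : Submodule k A} {d : ℕ} (hd : 1 ≤ d)
    (hW : ∀ x ∈ W, x ^ d ∈ Submodule.span k ((x ^ ·) '' Set.Icc 1 (d - 1)))
    {p : A[X]} (hp : p ∈ posRees F) {M : ℕ} (hdeg : p.natDegree ≤ M) (hpW : ∀ e, p.coeff e ∈ W)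
    (e : ℕ) : (p ^ ((d - 1) * M + 1)).coeff e ∈ F ((d - 1) * M) := by
  set K := (d - 1) * M
  have heval : ∀ c : k, scalarEval A c p ∈ W ∧ scalarEval A c p ∈ F M := fun c => by
    rw [scalarEval_eq_sum_range c (Nat.lt_succ_of_le hdeg)]
    refine ⟨sum_mem fun e _ => W.smul_mem _ (hpW e), sum_mem fun e he => (F M).smul_mem _ ?_⟩
    exact hmono (Nat.lt_succ_iff.mp (Finset.mem_range.mp he)) (hp.2 e)
  have heval_pow : ∀ c : k, scalarEval A c (p ^ (K + 1)) ∈ F K := fun c => by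
    have hspan : Submodule.span k ((scalarEval A c p ^ ·) '' Set.Icc 1 (d - 1)) ≤ F K := by
      refine Submodule.span_le.mpr ?_
      rintro _ ⟨i, ⟨hi, hid⟩, rfl⟩
      exact hmono (Nat.mul_le_mul_right M hid) (pow_mem_filtration F hmulF (heval c).2 i hi)
    rw [map_pow]
    exact hspan (pow_mem_span_pow_Icc_s16 hd (hW _ (heval c).1) (K + 1) le_add_self)
  by_cases he : e < (p ^ (K + 1)).natDegree + 1
  · refine Submodule.mem_of_forall_sum_pow_smul_mem _ (fun c => ?_) he
    rw [← scalarEval_eq_sum_range c (Nat.lt_succ_self _)]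
    exact heval_pow c
  · rw [coeff_eq_zero_of_natDegree_lt (by omega)]
    exact zero_mem _

theorem gr_LBI_of_LBD_general
    (k : Type*) [Field k] [Infinite k]
    (A : Type*) [Ring A] [Algebra k A]
    (F : ℕ → Submodule k A)
    (hmono : Monotone F)
    (hmulF : ∀ i j : ℕ, ∀ x ∈ F i, ∀ y ∈ F j, x * y ∈ F (i + j))
    (B : Type*) [Ring B] [Algebra k B]
    (φ : ∀ n : ℕ, F n →ₗ[k] B)
    (hker : ∀ n : ℕ, ∀ x : F (n + 1), φ (n + 1) x = 0 ↔ (x : A) ∈ F n)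
    (hmulφ : ∀ p q : ℕ, ∀ x : F p, ∀ y : F q,
      φ p x * φ q y = φ (p + q) ⟨(x : A) * (y : A), hmulF p q _ x.2 _ y.2⟩)
    (hLBD : ∀ S : Submodule k A, FiniteDimensional k S → ∃ d : ℕ, 1 ≤ d ∧
      ∀ s ∈ S, s ^ d ∈ Submodule.span k ((fun i : ℕ => s ^ i) '' Set.Icc 1 (d - 1))) :
    ∀ S : Submodule k B, S ≤ (⨆ n : ℕ, LinearMap.range (φ (n + 1))) →
      FiniteDimensional k S → ∃ N : ℕ, ∀ s ∈ S, s ^ N = 0 := by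
  intro S hSle hSfd
  obtain ⟨U, hUP, hUfg, hSU⟩ := Submodule.exists_fg_le_map_of_fg_of_le_map
    ((Submodule.fg_iff_finiteDimensional S).mpr hSfd)
    (hSle.trans (iSup_range_le_map_symbolMap F φ))
  obtain ⟨M, W, hWfd, hUW⟩ := exists_natDegree_le_coeff_mem_of_fg hUfg
  obtain ⟨d, hd, hdW⟩ := hLBD W hWfd
  refine ⟨(d - 1) * M + 1, fun s hs => ?_⟩
  obtain ⟨p, hpU, rfl⟩ := hSU hs
  have hp := hUP hpU
  obtain ⟨hpow_mem, hpow⟩ := symbolMap_pow_succ F φ hmulF hmulφ hp ((d - 1) * M)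
  rw [← hpow]
  refine symbolMap_eq_zero F φ hker hpow_mem fun e => ?_
  by_cases he : e < (d - 1) * M
  · rw [coeff_pow_eq_zero_of_coeff_zero_eq_zero hp.1 (by omega)]
    exact zero_mem _
  · exact hmono (not_lt.mp he)
      (coeff_pow_mem_filtration hmono hmulF hd hdW hp (hUW p hpU).1 (hUW p hpU).2 (e + 1))

/-- Let `k` be an infinite field and `A` an associative `k`-algebra with filtration
`F_0 ⊆ F_1 ⊆ ⋯` (an increasing chain of `k`-subspaces with `⋃ F_i = A` and
`F_i F_j ⊆ F_{i+j}`).  If `A` is locally of bounded degree (LBD), then `gr(A)_{≥1}`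
is locally of bounded index (LBI).

The associated graded algebra `gr(A) = ⊕_{n≥0} F_n/F_{n−1}` (with `F_{−1} = 0`) is
presented by an algebra `B` together with `k`-linear maps `φ n : F n → B` realizing the
quotient maps `F_n → F_n/F_{n−1} ⊆ gr(A)`: the kernel of `φ n` is exactly `F_{n-1}`
(with `φ 0` injective), and `φ p x * φ q y = φ (p+q) (x*y)`, which encodes the
multiplication of `gr(A)`.  Then `gr(A)_{≥1} = ⨆ n, range (φ (n+1))`, and LBI for it
says: every finite-dimensional `k`-subspace `S` of `gr(A)_{≥1}` has bounded index. -/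
theorem gr_LBI_of_LBD
    (k : Type*) [Field k] [Infinite k]
    (A : Type*) [Ring A] [Algebra k A]
    (F : ℕ → Submodule k A)
    (hmono : Monotone F)
    (hexh : ∀ a : A, ∃ n : ℕ, a ∈ F n)
    (hmulF : ∀ i j : ℕ, ∀ x ∈ F i, ∀ y ∈ F j, x * y ∈ F (i + j))
    (B : Type*) [Ring B] [Algebra k B]
    (φ : ∀ n : ℕ, F n →ₗ[k] B)
    (hker0 : ∀ x : F 0, φ 0 x = 0 ↔ (x : A) = 0)
    (hker : ∀ n : ℕ, ∀ x : F (n + 1), φ (n + 1) x = 0 ↔ (x : A) ∈ F n)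
    (hmulφ : ∀ p q : ℕ, ∀ x : F p, ∀ y : F q,
      φ p x * φ q y = φ (p + q) ⟨(x : A) * (y : A), hmulF p q _ x.2 _ y.2⟩)
    (hLBD : ∀ S : Submodule k A, FiniteDimensional k S → ∃ d : ℕ, 1 ≤ d ∧
      ∀ s ∈ S, s ^ d ∈ Submodule.span k ((fun i : ℕ => s ^ i) '' Set.Icc 1 (d - 1))) :
    ∀ S : Submodule k B, S ≤ (⨆ n : ℕ, LinearMap.range (φ (n + 1))) →
      FiniteDimensional k S → ∃ N : ℕ, ∀ s ∈ S, s ^ N = 0 :=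
  gr_LBI_of_LBD_general k A F hmono hmulF B φ hker hmulφ hLBD
end

section
/- Let A be a unital associative k-algebra with filtration {A_n}_{n≥0}, and let R = ⊕_{n≥0} x^n A_n ⊆ A[x] be the Rees algebra of the filtration. Let a(x) = a_1 x + a_2 x^2 + … + a_m x^m ∈ R with a_i ∈ A_i for each i, and suppose a(x) is integral over k[x]. Then a(x)^N ∈ xR for some N ≥ 0. -/
/-!
Modulo `xR` the Rees algebra `R` becomes the associated graded algebra `gr A`, on which
`q(x) ∈ k[x]` acts as the scalar `q(0)`. Multiplying the integral relation by `a(x)` and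
reducing mod `xR` gives `Q(a(x)) ∈ xR` for the monic `Q(T) = T (Tⁿ + Σ qᵢ(0) Tⁱ) ∈ k[T]`.
Writing `Q = Tᵐ U` with `c = U(0) ≠ 0`, this reads `c a(x)ᵐ + a(x)ᵐ g ∈ xR` with `g ∈ R`
without constant term, and comparing lowest-degree components in `gr A` gives `a(x)ᵐ ∈ xR`.
-/

open Polynomial

namespace Rees

variable {k A : Type*} [Field k] [Ring A] [Algebra k A]

def reesSubmodule (G : ℕ → Submodule k A) : Submodule k A[X] where
  carrier := {f | ∀ n, f.coeff n ∈ G n}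
  add_mem' hf hg n := by simpa using add_mem (hf n) (hg n)
  zero_mem' n := by simp
  smul_mem' c f hf n := by simpa using (G n).smul_mem c (hf n)

theorem mul_mem_reesSubmodule {G H K : ℕ → Submodule k A}
    (hmul : ∀ i j, ∀ x ∈ G i, ∀ y ∈ H j, x * y ∈ K (i + j)) {f g : A[X]}
    (hf : f ∈ reesSubmodule G) (hg : g ∈ reesSubmodule H) : f * g ∈ reesSubmodule K := by
  intro n
  rw [coeff_mul]
  refine Submodule.sum_mem _ fun ab hab => ?_
  rw [Finset.HasAntidiagonal.mem_antidiagonal] at hab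
  exact hab ▸ hmul _ _ _ (hf ab.1) _ (hg ab.2)

theorem pow_succ_mem_reesSubmodule {F : ℕ → Submodule k A}
    (hmul : ∀ i j, ∀ x ∈ F i, ∀ y ∈ F j, x * y ∈ F (i + j)) {p : A[X]}
    (hp : p ∈ reesSubmodule F) (i : ℕ) : p ^ (i + 1) ∈ reesSubmodule F := by
  induction i with
  | zero => simpa using hp
  | succ i ih => rw [pow_succ]; exact mul_mem_reesSubmodule hmul ih hp

theorem X_mul_mem_reesSubmodule {F : ℕ → Submodule k A} (hmono : Monotone F) {f : A[X]}
    (hf : f ∈ reesSubmodule F) : X * f ∈ reesSubmodule F := by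
  rintro (_ | n)
  · simp
  · rw [coeff_X_mul]
    exact hmono n.le_succ (hf n)

theorem map_mul_mem_reesSubmodule {F : ℕ → Submodule k A} (hmono : Monotone F) (q : k[X])
    {f : A[X]} (hf : f ∈ reesSubmodule F) : q.map (algebraMap k A) * f ∈ reesSubmodule F := by
  induction q using Polynomial.induction_on with
  | C a =>
    simpa [← Polynomial.smul_eq_C_mul, algebraMap_smul] using (reesSubmodule F).smul_mem a hf
  | add q r hq hr => rw [Polynomial.map_add, add_mul]; exact add_mem hq hr
  | monomial n a ih =>
    have h : (C a * X ^ (n + 1)).map (algebraMap k A) * f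
        = X * ((C a * X ^ n).map (algebraMap k A) * f) := by
      simp only [Polynomial.map_mul, map_C, Polynomial.map_pow, map_X]
      rw [pow_succ', ← mul_assoc, ← X_mul_C, mul_assoc, mul_assoc, mul_assoc]
    rw [h]
    exact X_mul_mem_reesSubmodule hmono ih

/-- The filtration `n ↦ A_{n-1}` (with `A_{-1} = 0`), whose Rees submodule is `xR`. -/
def shift (F : ℕ → Submodule k A) : ℕ → Submodule k A
  | 0 => ⊥
  | j + 1 => F j

theorem mem_reesSubmodule_shift {F : ℕ → Submodule k A} {f : A[X]} :
    f ∈ reesSubmodule (shift F) ↔ ∃ r ∈ reesSubmodule F, f = X * r := by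
  constructor
  · intro hf
    have h0 : f.coeff 0 = 0 := (Submodule.mem_bot k).mp (hf 0)
    refine ⟨f.divX, fun n => by rw [coeff_divX]; exact hf (n + 1), ?_⟩
    simpa [h0] using (X_mul_divX_add f).symm
  · rintro ⟨r, hr, rfl⟩ (_ | n)
    · simp [shift]
    · rw [coeff_X_mul]; exact hr n

theorem shift_mul_mem {F : ℕ → Submodule k A}
    (hmul : ∀ i j, ∀ x ∈ F i, ∀ y ∈ F j, x * y ∈ F (i + j)) :
    ∀ i j, ∀ x ∈ shift F i, ∀ y ∈ F j, x * y ∈ shift F (i + j)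
  | 0, j, x, hx, y, _ => by simp [(Submodule.mem_bot k).mp hx]
  | i + 1, j, x, hx, y, hy => by
    rw [Nat.add_right_comm]; exact hmul i j x hx y hy

theorem mem_reesSubmodule_of_smul_add_mul_mem {G F : ℕ → Submodule k A}
    (hmul : ∀ i j, ∀ x ∈ G i, ∀ y ∈ F j, x * y ∈ G (i + j)) {c : k} (hc : c ≠ 0)
    {f g : A[X]} (hg : g ∈ reesSubmodule F) (hg0 : g.coeff 0 = 0)
    (h : c • f + f * g ∈ reesSubmodule G) : f ∈ reesSubmodule G := by
  intro j
  induction j using Nat.strong_induction_on with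
  | _ j ih =>
  have hsum : (f * g).coeff j ∈ G j := by
    rw [coeff_mul]
    refine Submodule.sum_mem _ fun ab hab => ?_
    rw [Finset.HasAntidiagonal.mem_antidiagonal] at hab
    rcases Nat.eq_zero_or_pos ab.2 with hb | hb
    · simp [hb, hg0]
    · exact hab ▸ hmul _ _ _ (ih ab.1 (by omega)) _ (hg ab.2)
  have := sub_mem (h j) hsum
  rw [coeff_add, add_sub_cancel_right, coeff_smul] at this
  exact (Submodule.smul_mem_iff _ hc).mp this

theorem map_mul_sub_smul_mem_shift {F : ℕ → Submodule k A} (hmono : Monotone F) (q : k[X])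
    {f : A[X]} (hf : f ∈ reesSubmodule F) :
    q.map (algebraMap k A) * f - q.coeff 0 • f ∈ reesSubmodule (shift F) := by
  have h : q.map (algebraMap k A) * f - q.coeff 0 • f
      = X * (q.divX.map (algebraMap k A) * f) := by
    have hq : q.map (algebraMap k A)
        = X * q.divX.map (algebraMap k A) + C (algebraMap k A (q.coeff 0)) := by
      conv_lhs => rw [← X_mul_divX_add q]
      rw [Polynomial.map_add, Polynomial.map_mul, map_X, map_C]
    rw [hq, add_mul, mul_assoc, ← smul_eq_C_mul, algebraMap_smul, add_sub_cancel_right]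
  rw [h, mem_reesSubmodule_shift]
  exact ⟨_, map_mul_mem_reesSubmodule hmono _ hf, rfl⟩

theorem mul_aeval_mem_reesSubmodule {F : ℕ → Submodule k A}
    (hmul : ∀ i j, ∀ x ∈ F i, ∀ y ∈ F j, x * y ∈ F (i + j)) {p : A[X]}
    (hp : p ∈ reesSubmodule F) (V : k[X]) : p * aeval p V ∈ reesSubmodule F := by
  rw [aeval_eq_sum_range, Finset.mul_sum]
  refine Submodule.sum_mem _ fun i _ => ?_
  rw [mul_smul_comm, ← pow_succ']
  exact Submodule.smul_mem _ _ (pow_succ_mem_reesSubmodule hmul hp i)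

theorem exists_pow_mem_shift_of_aeval_mem {F : ℕ → Submodule k A}
    (hmul : ∀ i j, ∀ x ∈ F i, ∀ y ∈ F j, x * y ∈ F (i + j)) {p : A[X]}
    (hp0 : p.coeff 0 = 0) (hp : p ∈ reesSubmodule F) {Q : k[X]} (hQ0 : Q ≠ 0)
    (hQ : aeval p Q ∈ reesSubmodule (shift F)) :
    ∃ m, p ^ m ∈ reesSubmodule (shift F) := by
  obtain ⟨U, hQU, hU⟩ := exists_eq_pow_rootMultiplicity_mul_and_not_dvd Q hQ0 0
  rw [map_zero, sub_zero] at hQU hU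
  rw [X_dvd_iff] at hU
  set m := rootMultiplicity 0 Q
  have hU_eval : aeval p U = algebraMap k A[X] (U.coeff 0) + p * aeval p U.divX := by
    conv_lhs => rw [← X_mul_divX_add U]
    rw [map_add, map_mul, aeval_X, aeval_C, add_comm]
  have hQ_eval : aeval p Q = U.coeff 0 • p ^ m + p ^ m * (p * aeval p U.divX) := by
    rw [hQU, map_mul, map_pow, aeval_X, hU_eval, mul_add, Algebra.smul_def, Algebra.commutes]
  have hg0 : (p * aeval p U.divX).coeff 0 = 0 := by rw [mul_coeff_zero, hp0, zero_mul]
  exact ⟨m, mem_reesSubmodule_of_smul_add_mul_mem (shift_mul_mem hmul) hU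
    (mul_aeval_mem_reesSubmodule hmul hp _) hg0 (hQ_eval ▸ hQ)⟩

/-- The relation is multiplied by `p` because `1` need not lie in `A_0`. -/
theorem aeval_mem_shift_of_integral {F : ℕ → Submodule k A} (hmono : Monotone F)
    (hmul : ∀ i j, ∀ x ∈ F i, ∀ y ∈ F j, x * y ∈ F (i + j)) {p : A[X]}
    (hp : p ∈ reesSubmodule F) {n : ℕ} {q : ℕ → k[X]}
    (heq : p ^ n + ∑ i ∈ Finset.range n, (q i).map (algebraMap k A) * p ^ i = 0) :
    aeval p (X ^ (n + 1) + ∑ i ∈ Finset.range n, C ((q i).coeff 0) * X ^ (i + 1))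
      ∈ reesSubmodule (shift F) := by
  have h : aeval p (X ^ (n + 1) + ∑ i ∈ Finset.range n, C ((q i).coeff 0) * X ^ (i + 1))
      = (p ^ n + ∑ i ∈ Finset.range n, (q i).map (algebraMap k A) * p ^ i) * p
        - ∑ i ∈ Finset.range n,
            ((q i).map (algebraMap k A) * p ^ (i + 1) - (q i).coeff 0 • p ^ (i + 1)) := by
    simp only [pow_succ, map_add, map_mul, map_pow, aeval_X, map_sum, aeval_C,
      Polynomial.algebraMap_apply, add_mul, Finset.sum_mul, mul_assoc, Algebra.smul_def,
      Finset.sum_sub_distrib]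
    abel
  rw [h, heq, zero_mul, zero_sub]
  exact neg_mem (Submodule.sum_mem _ fun i _ =>
    map_mul_sub_smul_mem_shift hmono _ (pow_succ_mem_reesSubmodule hmul hp i))

end Rees

open Rees

theorem rees_pow_mem_xR_of_integral_general
    (k : Type*) [Field k] (A : Type*) [Ring A] [Algebra k A]
    (F : ℕ → Submodule k A)
    (hmono : Monotone F)
    (hmulF : ∀ i j : ℕ, ∀ x ∈ F i, ∀ y ∈ F j, x * y ∈ F (i + j))
    (p : Polynomial A)
    (hp0 : p.coeff 0 = 0)
    (hpR : ∀ n : ℕ, p.coeff n ∈ F n)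
    (hint : ∃ n : ℕ, 1 ≤ n ∧ ∃ q : ℕ → Polynomial k,
      p ^ n + ∑ i ∈ Finset.range n, (q i).map (algebraMap k A) * p ^ i = 0) :
    ∃ N : ℕ, ∃ r : Polynomial A, (∀ n : ℕ, r.coeff n ∈ F n) ∧ p ^ N = Polynomial.X * r := by
  obtain ⟨n, -, q, heq⟩ := hint
  have hQ0 : X ^ (n + 1) + ∑ i ∈ Finset.range n, C ((q i).coeff 0) * X ^ (i + 1) ≠ 0 := by
    intro h
    simpa [coeff_X_pow] using congrArg (coeff · (n + 1)) h
  obtain ⟨N, hN⟩ := exists_pow_mem_shift_of_aeval_mem hmulF hp0 hpR hQ0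
    (aeval_mem_shift_of_integral hmono hmulF hpR heq)
  obtain ⟨r, hr, hpr⟩ := mem_reesSubmodule_shift.mp hN
  exact ⟨N, r, hr, hpr⟩

/-- Let `A` be a unital associative `k`-algebra with filtration `{A_n}` and let
`R = ⊕_{n≥0} x^n A_n ⊆ A[x]` be the Rees algebra of the filtration, i.e. the set of
polynomials `p` with `p.coeff n ∈ A_n` for all `n`.  If `a(x) = a_1 x + ⋯ + a_m x^m ∈ R`
(a polynomial with zero constant term and `i`-th coefficient in `A_i`) is integral over
`k[x]` — i.e. `a(x)^n + p_{n−1}(x) a(x)^{n−1} + ⋯ + p_0(x) = 0` for some `n ≥ 1` and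
`p_i(x) ∈ k[x]` — then `a(x)^N ∈ xR` for some `N ≥ 0`. -/
theorem rees_pow_mem_xR_of_integral
    (k : Type*) [Field k] (A : Type*) [Ring A] [Algebra k A]
    (F : ℕ → Submodule k A)
    (hmono : Monotone F)
    (hexh : ∀ a : A, ∃ n : ℕ, a ∈ F n)
    (hmulF : ∀ i j : ℕ, ∀ x ∈ F i, ∀ y ∈ F j, x * y ∈ F (i + j))
    (p : Polynomial A)
    (hp0 : p.coeff 0 = 0)
    (hpR : ∀ n : ℕ, p.coeff n ∈ F n)
    (hint : ∃ n : ℕ, 1 ≤ n ∧ ∃ q : ℕ → Polynomial k,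
      p ^ n + ∑ i ∈ Finset.range n, (q i).map (algebraMap k A) * p ^ i = 0) :
    ∃ N : ℕ, ∃ r : Polynomial A, (∀ n : ℕ, r.coeff n ∈ F n) ∧ p ^ N = Polynomial.X * r :=
  rees_pow_mem_xR_of_integral_general k A F hmono hmulF p hp0 hpR hint
end
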